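/- arXiv:1502.07657 — 2 statements merged into one kernel-verified Lean document; each statement's English description precedes it below -/
import Mathlib

section
/- For every integer I ≥ 1 and every p ∈ [1/2, 1], Σ_{l=1}^{I} 2^{-l} · (Π_{m=l}^{I-1} (2^m - 1)p/((2^m - 2)p + 1)) · 2^I/((2^I - 2)p + 1) = 1, where the empty product (when l = I) equals 1. -/
lemma ggw_denom_pos (p : ℝ) (hp : p ∈ Set.Icc (1/2 : ℝ) 1) (n : ℕ) :
    0 < ((2:ℝ)^(n+1) - 2) * p + 1 := by
  obtain ⟨h1, h2⟩ := hp
  have h2n : (2:ℝ) ≤ 2^(n+1) := by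
    calc (2:ℝ) = 2^1 := by norm_num
    _ ≤ 2^(n+1) := by
      apply pow_le_pow_right₀ (by norm_num) (by omega)
  nlinarith

lemma ggw_aux (p : ℝ) (hp : p ∈ Set.Icc (1/2 : ℝ) 1) (n : ℕ) :
    ∑ l ∈ Finset.Icc 1 (n+1),
      (2:ℝ)^(-(l:ℤ)) *
        (∏ m ∈ Finset.Icc l n, ((2:ℝ)^m - 1) * p / (((2:ℝ)^m - 2) * p + 1))
      = (((2:ℝ)^(n+1) - 2) * p + 1) / 2^(n+1) := by
  induction n with
  | zero => simp
  | succ n ih =>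
    rw [Finset.sum_Icc_succ_top (by omega : 1 ≤ n+2)]
    have hprod : ∀ l ∈ Finset.Icc 1 (n+1),
        (2:ℝ)^(-(l:ℤ)) *
          (∏ m ∈ Finset.Icc l (n+1), ((2:ℝ)^m - 1) * p / (((2:ℝ)^m - 2) * p + 1))
        = ((2:ℝ)^(-(l:ℤ)) *
          (∏ m ∈ Finset.Icc l n, ((2:ℝ)^m - 1) * p / (((2:ℝ)^m - 2) * p + 1))) *
          (((2:ℝ)^(n+1) - 1) * p / (((2:ℝ)^(n+1) - 2) * p + 1)) := by
      intro l hl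
      simp only [Finset.mem_Icc] at hl
      rw [Finset.prod_Icc_succ_top (by omega : l ≤ n+1)]
      ring
    rw [Finset.sum_congr rfl hprod, ← Finset.sum_mul, ih]
    have he : Finset.Icc (n+2) (n+1) = ∅ := by
      apply Finset.Icc_eq_empty; omega
    rw [he]
    have hd := ggw_denom_pos p hp n
    have hd' := ggw_denom_pos p hp (n+1)
    have h2 : (0:ℝ) < 2^(n+1) := by positivity
    have h2' : (0:ℝ) < 2^(n+2) := by positivity
    have hz : (2:ℝ)^(-((n+2:ℕ):ℤ)) = 1 / 2^(n+2) := by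
      rw [zpow_neg, zpow_natCast]
      simp
    rw [hz]
    have hpow : (2:ℝ)^(n+2) = 2 * 2^(n+1) := by ring
    field_simp
    ring_nf


/-- For every `I ≥ 1` and `p ∈ [1/2,1]`,
`∑_{l=1}^{I} 2^{-l} (∏_{m=l}^{I-1} (2^m-1)p/((2^m-2)p+1)) · 2^I/((2^I-2)p+1) = 1`,
where the empty product (when `l = I`) equals `1`. -/
theorem geometric_gw_induction_identity (I : ℕ) (hI : 1 ≤ I) (p : ℝ)
    (hp : p ∈ Set.Icc (1/2 : ℝ) 1) :
    ∑ l ∈ Finset.Icc 1 I,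
      (2:ℝ)^(-(l:ℤ)) *
        (∏ m ∈ Finset.Icc l (I-1), ((2:ℝ)^m - 1) * p / (((2:ℝ)^m - 2) * p + 1)) *
        ((2:ℝ)^I / (((2:ℝ)^I - 2) * p + 1)) = 1 := by
  obtain ⟨n, rfl⟩ : ∃ n, I = n + 1 := ⟨I - 1, by omega⟩
  have h := ggw_aux p hp n
  rw [← Finset.sum_mul]
  simp only [Nat.add_sub_cancel]
  rw [h]
  have hd := ggw_denom_pos p hp n
  have h2 : (0:ℝ) < 2^(n+1) := by positivity
  field_simp
end

section
/- For p ∈ (1/2, 1) and k ≥ 1, the probability that a Geometric(p) Galton-Watson tree has size k, conditioned on being finite, equals η_k(1-p), i.e. η_k(p)/(1 - η_∞(p)) = c_k (1-p)^{k-1} p^k. -/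
/-- For `p ∈ (1/2,1)` and `k ≥ 1`, with `η_k(p) = c_k p^{k-1}(1-p)^k` and
`η_∞(p) = (2p-1)/p`, one has `η_k(p)/(1-η_∞(p)) = c_k (1-p)^{k-1} p^k = η_k(1-p)`. -/
theorem conditioned_on_finite_duality (p : ℝ) (hp : 1/2 < p) (hp1 : p < 1)
    (k : ℕ) (hk : 1 ≤ k) (c : ℝ) :
    (c * p^(k-1) * (1 - p)^k) / (1 - (2*p - 1)/p) = c * (1 - p)^(k-1) * p^k := by
  have hp0 : p ≠ 0 := by linarith
  have h1p : 1 - p ≠ 0 := by linarith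
  obtain ⟨m, rfl⟩ : ∃ m, k = m + 1 := ⟨k - 1, by omega⟩
  have : 1 - (2*p - 1)/p = (1-p)/p := by field_simp; ring
  rw [this]
  simp only [Nat.add_sub_cancel, pow_succ]
  field_simp
end
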